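/- arXiv:2110.03538 — 10 statements merged into one kernel-verified Lean document; each statement's English description precedes it below -/
import Mathlib

section
/- Let X = ω ∪ {∞₀, ∞₁, ∞₂}, where ∞₀, ∞₁, ∞₂ are three distinct points not in ω (e.g. X := ℕ ⊕ Fin 3). Define a relation ℷ between points of X and proper filters on X by: x ∈ lim_ℷ F iff either x ≠ ∞₂, or there exists a finite set K ⊆ ω such that K ∪ {∞₁, ∞₂} ∈ F. Then ℷ is a convergence on X and moreover ℷ is a paratopology. -/
open Filter Set

/-- A convergence on `X`: a relation between points and proper filters such that
limits are preserved under refinement and `pure x` converges to `x`. -/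
def IsConvergence {X : Type*} (lim : X → Filter X → Prop) : Prop :=
  (∀ (x : X) (F G : Filter X), G.NeBot → G ≤ F → lim x F → lim x G) ∧
  (∀ x : X, lim x (pure x))

/-- The adherence of a filter `H`: the set of points that are limits of some
proper filter finer than `H`. -/
def adh {X : Type*} (lim : X → Filter X → Prop) (H : Filter X) : Set X :=
  {x | ∃ G : Filter X, G.NeBot ∧ G ≤ H ∧ lim x G}

/-- Two filters mesh iff every member of one intersects every member of the other. -/
def Mesh {X : Type*} (F H : Filter X) : Prop :=
  ∀ A ∈ F, ∀ B ∈ H, (A ∩ B).Nonempty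

/-- A paratopology: a convergence that is adherence-determined with respect to
countably based filters. -/
def IsParatopology {X : Type*} (lim : X → Filter X → Prop) : Prop :=
  ∀ (x : X) (F : Filter X), F.NeBot →
    (∀ H : Filter X, H.IsCountablyGenerated → Mesh F H → x ∈ adh lim H) → lim x F

/-- The ground set `X = ω ∪ {∞₀, ∞₁, ∞₂}`, with `∞ᵢ := Sum.inr i`. -/
abbrev Gsp : Type := ℕ ⊕ Fin 3

/-- The convergence `ℷ` on `Gsp`: a filter `F` converges to `x` iff either `x ≠ ∞₂`,
or `K ∪ {∞₁, ∞₂} ∈ F` for some finite `K ⊆ ω`. -/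
def glim (x : Gsp) (F : Filter Gsp) : Prop :=
  x ≠ Sum.inr 2 ∨
    ∃ K : Set ℕ, K.Finite ∧ Sum.inl '' K ∪ {Sum.inr 1, Sum.inr 2} ∈ F

/-- `ℷ` is a convergence on `X = ω ∪ {∞₀, ∞₁, ∞₂}` and moreover a paratopology. -/
theorem glim_isConvergence_isParatopology :
    IsConvergence glim ∧ IsParatopology glim := by
  constructor
  · constructor
    · rintro x F G _ hGF (h | ⟨K, hK, hKF⟩)
      · exact Or.inl h
      · exact Or.inr ⟨K, hK, hGF hKF⟩
    · intro x
      by_cases hx : x = Sum.inr 2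
      · subst hx
        refine Or.inr ⟨∅, Set.finite_empty, ?_⟩
        simp [Set.mem_insert_iff]
      · exact Or.inl hx
  · intro x F hF hadh
    by_cases hx : x = Sum.inr 2
    · subst hx
      by_contra hlim
      simp only [glim, ne_eq, not_or, not_exists, not_and] at hlim
      obtain ⟨-, hne⟩ := hlim
      -- The countably based filter with basis T n
      set T : ℕ → Set Gsp := fun n => Sum.inl '' {m | n ≤ m} ∪ {Sum.inr 0} with hT
      have hmono : ∀ {a b : ℕ}, a ≤ b → T b ⊆ T a := by
        intro a b hab y hy
        rcases hy with ⟨m, hm, rfl⟩ | hy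
        · exact Or.inl ⟨m, le_trans hab hm, rfl⟩
        · exact Or.inr hy
      have hdir : Directed (· ≥ ·) T := by
        intro a b
        exact ⟨max a b, hmono (le_max_left a b), hmono (le_max_right a b)⟩
      set H : Filter Gsp := ⨅ n, 𝓟 (T n) with hH
      have hbasis : H.HasBasis (fun _ : ℕ => True) T := by
        simpa using Filter.hasBasis_iInf_principal hdir
      have hcg : H.IsCountablyGenerated := hbasis.isCountablyGenerated
      have hmesh : Mesh F H := by
        intro A hA B hB
        obtain ⟨n, -, hTn⟩ := hbasis.mem_iff.1 hB
        rcases Set.eq_empty_or_nonempty (A ∩ T n) with he | hne2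
        · exfalso
          apply hne {m | m < n} (Set.finite_Iio n)
          refine Filter.mem_of_superset hA ?_
          intro y hy
          have hyT : y ∉ T n := fun hyT => Set.eq_empty_iff_forall_notMem.1 he y ⟨hy, hyT⟩
          rcases y with m | j
          · by_cases hmn : m < n
            · exact Or.inl ⟨m, hmn, rfl⟩
            · exact absurd (Or.inl ⟨m, le_of_not_gt hmn, rfl⟩) hyT
          · have hj : j ≠ 0 := by
              rintro rfl
              exact hyT (Or.inr rfl)
            right
            fin_cases j
            · exact absurd rfl hj
            · exact Or.inl rfl
            · exact Or.inr rfl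
        · exact hne2.mono (Set.inter_subset_inter_right A hTn)
      obtain ⟨G, hG, hGH, hglim⟩ := hadh H hcg hmesh
      rcases hglim with h | ⟨K, hKfin, hKG⟩
      · exact h rfl
      · obtain ⟨b, hb⟩ := hKfin.bddAbove
        have hTn : T (b + 1) ∈ G := hGH (Filter.mem_iInf_of_mem (b + 1) (Set.mem_setOf_eq ▸ le_refl _))
        have : (Sum.inl '' K ∪ {Sum.inr 1, Sum.inr 2} : Set Gsp) ∩ T (b + 1) ∈ G :=
          Filter.inter_mem hKG hTn
        obtain ⟨y, hyS, hyT⟩ := Filter.nonempty_of_mem this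
        rcases hyS with ⟨m, hm, rfl⟩ | hyS
        · rcases hyT with ⟨m', hm', heq⟩ | heq
          · have : m' = m := Sum.inl.inj heq
            have : b + 1 ≤ m := this ▸ hm'
            exact absurd (hb hm) (by omega)
          · exact Sum.inl_ne_inr heq
        · rcases hyT with ⟨m', -, heq⟩ | heq
          · rcases hyS with rfl | hyS
            · exact Sum.inl_ne_inr heq
            · rw [Set.mem_singleton_iff] at hyS
              subst hyS
              exact Sum.inl_ne_inr heq
          · rcases hyS with rfl | hyS
            · simp at heq
            · rw [Set.mem_singleton_iff] at hyS
              subst hyS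
              simp at heq
    · exact Or.inl hx
end

section
/- Let ℷ be the convergence on X = ω ∪ {∞₀, ∞₁, ∞₂} defined by: x ∈ lim_ℷ F iff either x ≠ ∞₂, or there exists a finite set K ⊆ ω with K ∪ {∞₁, ∞₂} ∈ F. Then ℷ is initially dense in the class of paratopologies: for every set Y and every paratopology ξ on Y there exists a set A of functions from Y to X, each continuous from ξ to ℷ, such that for every y ∈ Y and every proper filter F on Y, y ∈ lim_ξ F if and only if f(y) ∈ lim_ℷ (map f F) for every f ∈ A. In particular the class of paratopologies is simple. -/
open Filter Set

/-- Continuity of a map between convergences. -/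
def ContinuousConv {X Y : Type*} (xi : X → Filter X → Prop) (eta : Y → Filter Y → Prop)
    (f : X → Y) : Prop :=
  ∀ (x : X) (F : Filter X), F.NeBot → xi x F → eta (f x) (F.map f)

open scoped Classical in
/-- Auxiliary function used to witness initial density: given a decreasing base `B`
of a countably based filter and a point `y`, map `y` to `∞₂`, points eventually
escaping the base to their escape rank, and points of the kernel to `∞₀`. -/
noncomputable def gfun {Y : Type*} (B : ℕ → Set Y) (y : Y) (z : Y) : Gsp :=
  if z = y then Sum.inr 2
  else if ∃ n, z ∉ B n then Sum.inl (sInf {n | z ∉ B n})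
  else Sum.inr 0

lemma gfun_eq_two {Y : Type*} {B : ℕ → Set Y} {y z : Y} :
    gfun B y z = Sum.inr 2 ↔ z = y := by
  unfold gfun
  split_ifs with h1 h2 <;> simp_all

lemma gfun_preimage_superset {Y : Type*} (B : ℕ → Set Y) (y : Y) (n : ℕ) :
    (B n \ {y})ᶜ ⊆ gfun B y ⁻¹' (Sum.inl '' Set.Iic n ∪ {Sum.inr 1, Sum.inr 2}) := by
  intro z hz
  by_cases hzy : z = y
  · subst hzy
    simp [mem_preimage, gfun]
  · have hzB : z ∉ B n := fun hb => hz ⟨hb, hzy⟩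
    have hex : ∃ m, z ∉ B m := ⟨n, hzB⟩
    have hf : gfun B y z = Sum.inl (sInf {m | z ∉ B m}) := by
      simp [gfun, hzy, hex]
    rw [mem_preimage, hf]
    exact Or.inl ⟨_, Nat.sInf_le hzB, rfl⟩

lemma gfun_preimage_subset {Y : Type*} {B : ℕ → Set Y} (hB : Antitone B) (y : Y) (N : ℕ) :
    gfun B y ⁻¹' (Sum.inl '' Set.Iic N ∪ {Sum.inr 1, Sum.inr 2}) ⊆ (B N \ {y})ᶜ := by
  intro z hz
  by_cases hzy : z = y
  · subst hzy
    simp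
  · by_cases hex : ∃ m, z ∉ B m
    · have hf : gfun B y z = Sum.inl (sInf {m | z ∉ B m}) := by
        simp [gfun, hzy, hex]
      rw [mem_preimage, hf] at hz
      rcases hz with ⟨k, hk, hkeq⟩ | h2
      · have hkk : k = sInf {m | z ∉ B m} := Sum.inl.inj hkeq
        have hle : sInf {m | z ∉ B m} ≤ N := hkk ▸ hk
        have hzs : z ∉ B (sInf {m | z ∉ B m}) := Nat.sInf_mem hex
        intro hmem
        exact hzs (hB hle hmem.1)
      · simp at h2
    · have hf : gfun B y z = Sum.inr 0 := by
        simp [gfun, hzy, hex]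
      rw [mem_preimage, hf] at hz
      simp at hz

/-- `ℷ` is initially dense in the class of paratopologies: for every paratopology `ξ`
on a set `Y` there is a set `A` of continuous maps from `ξ` to `ℷ` such that
`ξ = ⋂_{f ∈ A} f⁻ℷ`.  In particular, the class of paratopologies is simple. -/
theorem glim_initiallyDense :
    ∀ (Y : Type*) (xi : Y → Filter Y → Prop), IsConvergence xi → IsParatopology xi →
      ∃ A : Set (Y → Gsp),
        (∀ f ∈ A, ContinuousConv xi glim f) ∧
        ∀ (y : Y) (F : Filter Y), F.NeBot →
          (xi y F ↔ ∀ f ∈ A, glim (f y) (F.map f)) := by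
  intro Y xi hconv hpara
  refine ⟨{f | ContinuousConv xi glim f}, fun f hf => hf, fun y F hF => ?_⟩
  constructor
  · exact fun hxi f hf => hf y F hF hxi
  · intro hall
    apply hpara y F hF
    intro H hHc hmesh
    by_contra hadh
    haveI := hHc
    obtain ⟨B, hB⟩ := H.exists_antitone_basis
    have hBmem : ∀ n, B n ∈ H := fun n => hB.toHasBasis.mem_of_mem trivial
    -- continuity of the auxiliary map
    have hcont : ContinuousConv xi glim (gfun B y) := by
      intro x F₀ hF₀ hxF₀
      by_cases hxy : x = y
      · rw [hxy] at hxF₀ ⊢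
        refine Or.inr ?_
        by_contra hng
        push_neg at hng
        have hnot : ∀ n, (B n \ {y})ᶜ ∉ F₀ := by
          intro n hmem
          exact hng (Set.Iic n) (Set.finite_Iic n)
            (mem_map.2 (mem_of_superset hmem (gfun_preimage_superset B y n)))
        have hGne : NeBot (F₀ ⊓ (H ⊓ 𝓟 {y}ᶜ)) := by
          rw [inf_neBot_iff]
          intro s hs t ht
          obtain ⟨n, -, hns⟩ := (hB.toHasBasis.inf_principal ({y}ᶜ)).mem_iff.1 ht
          have hne : (s ∩ (B n \ {y})).Nonempty := by
            by_contra hemp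
            rw [Set.not_nonempty_iff_eq_empty, Set.eq_empty_iff_forall_notMem] at hemp
            exact hnot n (mem_of_superset hs (fun w hw hwB => hemp w ⟨hw, hwB⟩))
          obtain ⟨w, hw1, hw2⟩ := hne
          exact ⟨w, hw1, hns ⟨hw2.1, hw2.2⟩⟩
        exact absurd ⟨F₀ ⊓ (H ⊓ 𝓟 {y}ᶜ), hGne, inf_le_right.trans inf_le_left,
          hconv.1 y F₀ _ hGne inf_le_left hxF₀⟩ hadh
      · exact Or.inl (fun h => hxy (gfun_eq_two.1 h))
    have hg := hall (gfun B y) hcont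
    have hfy : gfun B y y = Sum.inr 2 := gfun_eq_two.2 rfl
    rw [hfy] at hg
    rcases hg with h2 | ⟨K, hKfin, hKmem⟩
    · exact h2 rfl
    obtain ⟨N, hN⟩ := hKfin.bddAbove
    have hsub : Sum.inl '' K ∪ {Sum.inr 1, Sum.inr 2} ⊆
        Sum.inl '' Set.Iic N ∪ ({Sum.inr 1, Sum.inr 2} : Set Gsp) :=
      Set.union_subset_union_left _ (Set.image_mono (fun k hk => hN hk))
    have hmem2 : (B N \ {y})ᶜ ∈ F :=
      mem_of_superset (mem_map.1 (mem_of_superset hKmem hsub))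
        (gfun_preimage_subset hB.antitone y N)
    have hyB : ∀ m, y ∈ B m := by
      intro m
      obtain ⟨z, hz1, hz2⟩ := hmesh _ hmem2 _ (hBmem (max m N))
      have hzN : z ∈ B N := hB.antitone (le_max_right m N) hz2
      have hzy : z = y := by
        by_contra h
        exact hz1 ⟨hzN, h⟩
      exact hzy ▸ hB.antitone (le_max_left m N) hz2
    have hpure : pure y ≤ H := by
      intro s hs
      obtain ⟨n, -, hns⟩ := hB.toHasBasis.mem_iff.1 hs
      exact mem_pure.2 (hns (hyB n))
    exact hadh ⟨pure y, pure_neBot, hpure, hconv.2 y⟩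
end

section
/- Let η be a paratopology on a set Y, let B₀ ⊇ B₁ ⊇ B₂ ⊇ … be a decreasing sequence of subsets of Y, let H be the filter on Y generated by {Bₙ : n ∈ ω}, and define f : Y → X = ω ∪ {∞₀, ∞₁, ∞₂} by: f(y) = n if y ∈ Bₙ \ Bₙ₊₁ for some n ∈ ω; f(y) = ∞₀ if y ∈ Bₙ for every n ∈ ω; f(y) = ∞₁ if y ∈ adh_η H \ ⋃ₙ Bₙ; and f(y) = ∞₂ otherwise. Then for every proper filter F on Y and every y ∈ Y with y ∈ lim_η F, one has f(y) ∈ lim_ℷ (map f F), where ℷ is the convergence on X defined by: x ∈ lim_ℷ G iff either x ≠ ∞₂, or there exists a finite K ⊆ ω with K ∪ {∞₁, ∞₂} ∈ G. -/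
open Filter Set

lemma find_step_aux {Y : Type*} {B : ℕ → Set Y} (hBanti : Antitone B) {z : Y} {m n : ℕ}
    (hm : z ∈ B m) (hn : z ∉ B n) : ∃ j, j < n ∧ z ∈ B j \ B (j + 1) := by
  classical
  have hex : ∃ k, z ∉ B k := ⟨n, hn⟩
  have hk : z ∉ B (Nat.find hex) := Nat.find_spec hex
  have hkn : Nat.find hex ≤ n := Nat.find_le hn
  have hkm : m < Nat.find hex := by
    by_contra hle
    push_neg at hle
    exact hk (hBanti hle hm)
  refine ⟨Nat.find hex - 1, by omega, ?_, ?_⟩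
  · by_contra hj
    exact Nat.find_min hex (by omega) hj
  · have : Nat.find hex - 1 + 1 = Nat.find hex := by omega
    rw [this]; exact hk

/-- Given a paratopology `η` on `Y`, a decreasing sequence `B₀ ⊇ B₁ ⊇ ⋯` of subsets of `Y`
generating the filter `H`, and the map `f : Y → X` defined by `f y = n` if `y ∈ Bₙ \ Bₙ₊₁`,
`f y = ∞₀` if `y ∈ ⋂ₙ Bₙ`, `f y = ∞₁` if `y ∈ adh_η H \ ⋃ₙ Bₙ`, and `f y = ∞₂` otherwise:
if `y ∈ lim_η F` then `f y ∈ lim_ℷ (map f F)`. -/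
theorem continuity_of_fB {Y : Type*} (eta : Y → Filter Y → Prop)
    (hconv : IsConvergence eta) (hpara : IsParatopology eta)
    (B : ℕ → Set Y) (hB : ∀ n, B (n + 1) ⊆ B n)
    (H : Filter Y) (hH : H = ⨅ n, 𝓟 (B n))
    (f : Y → Gsp)
    (hf0 : ∀ (y : Y) (n : ℕ), y ∈ B n \ B (n + 1) → f y = Sum.inl n)
    (hf1 : ∀ y : Y, (∀ n, y ∈ B n) → f y = Sum.inr 0)
    (hf2 : ∀ y : Y, y ∈ adh eta H \ ⋃ n, B n → f y = Sum.inr 1)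
    (hf3 : ∀ y : Y, y ∉ ⋃ n, B n → y ∉ adh eta H → f y = Sum.inr 2) :
    ∀ (F : Filter Y), F.NeBot → ∀ y : Y, eta y F → glim (f y) (F.map f) := by
  intro F hF y hy
  by_cases h2 : f y = Sum.inr 2
  swap
  · exact Or.inl h2
  right
  have hBanti : Antitone B := antitone_nat_of_succ_le hB
  -- y is not in any Bₙ
  have hyU : y ∉ ⋃ n, B n := by
    intro hyU
    obtain ⟨_, ⟨m, rfl⟩, hm⟩ := hyU
    by_cases hall : ∀ n, y ∈ B n
    · rw [hf1 y hall] at h2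
      simp at h2
    · push_neg at hall
      obtain ⟨n, hn⟩ := hall
      obtain ⟨j, _, hj⟩ := find_step_aux hBanti hm hn
      rw [hf0 y j hj] at h2
      simp at h2
  -- y is not in the adherence of H
  have hyadh : y ∉ adh eta H := by
    intro hadh
    rw [hf2 y ⟨hadh, hyU⟩] at h2
    simp at h2
  -- hence F does not mesh with H
  have hmesh : ¬ Mesh F H := by
    intro hm
    have hne : (F ⊓ H).NeBot := by
      rw [Filter.inf_neBot_iff]
      intro s hs t ht
      exact hm s hs t ht
    exact hyadh ⟨F ⊓ H, hne, inf_le_right, hconv.1 y F (F ⊓ H) hne inf_le_left hy⟩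
  simp only [Mesh] at hmesh
  push_neg at hmesh
  obtain ⟨A, hA, S, hS, hAS⟩ := hmesh
  -- S ∈ H contains some Bₙ
  have hdir : Directed (· ≥ ·) (fun n => (𝓟 (B n) : Filter Y)) := by
    intro i j
    exact ⟨max i j, principal_mono.2 (hBanti (le_max_left i j)),
      principal_mono.2 (hBanti (le_max_right i j))⟩
  rw [hH, mem_iInf_of_directed hdir] at hS
  obtain ⟨n, hn⟩ := hS
  rw [mem_principal] at hn
  refine ⟨Set.Iio n, Set.finite_Iio n, ?_⟩
  rw [Filter.mem_map]
  refine Filter.mem_of_superset hA ?_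
  intro z hz
  have hzB : z ∉ B n := by
    intro hzB
    exact absurd hAS (Set.nonempty_iff_ne_empty.1 ⟨z, hz, hn hzB⟩)
  simp only [Set.mem_preimage, Set.mem_union, Set.mem_image, Set.mem_insert_iff,
    Set.mem_singleton_iff]
  by_cases hzU : z ∈ ⋃ k, B k
  · obtain ⟨_, ⟨m, rfl⟩, hm⟩ := hzU
    obtain ⟨j, hjn, hj⟩ := find_step_aux hBanti hm hzB
    exact Or.inl ⟨j, hjn, (hf0 z j hj).symm⟩
  · by_cases hzadh : z ∈ adh eta H
    · exact Or.inr (Or.inl (hf2 z ⟨hzadh, hzU⟩))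
    · exact Or.inr (Or.inr (hf3 z hzU hzadh))
end

section
/- Let η be a paratopology on a set Y, let F be a proper filter on Y and y ∈ Y with y ∉ lim_η F. Then there exists a decreasing sequence B₀ ⊇ B₁ ⊇ B₂ ⊇ … of subsets of Y such that, with H the filter generated by {Bₙ : n ∈ ω} and f : Y → X = ω ∪ {∞₀, ∞₁, ∞₂} defined by f(y) = n if y ∈ Bₙ \ Bₙ₊₁, f(y) = ∞₀ if y ∈ ⋂ₙ Bₙ, f(y) = ∞₁ if y ∈ adh_η H \ ⋃ₙ Bₙ, and f(y) = ∞₂ otherwise, one has f(y) = ∞₂ and ∞₂ ∉ lim_ℷ (map f F), where ℷ is the convergence on X defined by: x ∈ lim_ℷ G iff either x ≠ ∞₂, or there exists a finite K ⊆ ω with K ∪ {∞₁, ∞₂} ∈ G. -/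
open Filter Set

/-- Given a paratopology `η` on `Y`, a proper filter `F` on `Y` and `y ∉ lim_η F`, there is
a decreasing sequence `B₀ ⊇ B₁ ⊇ ⋯` of subsets of `Y` such that, with `H` the generated
filter and `f : Y → X` defined by `f w = n` if `w ∈ Bₙ \ Bₙ₊₁`, `f w = ∞₀` if `w ∈ ⋂ₙ Bₙ`,
`f w = ∞₁` if `w ∈ adh_η H \ ⋃ₙ Bₙ`, and `f w = ∞₂` otherwise, one has `f y = ∞₂` and
`∞₂ ∉ lim_ℷ (map f F)`. -/
theorem separation_of_nonlimit {Y : Type*} (eta : Y → Filter Y → Prop)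
    (hconv : IsConvergence eta) (hpara : IsParatopology eta)
    (F : Filter Y) (hF : F.NeBot) (y : Y) (hy : ¬ eta y F) :
    ∃ B : ℕ → Set Y, (∀ n, B (n + 1) ⊆ B n) ∧
      ∀ f : Y → Gsp,
        (∀ (w : Y) (n : ℕ), w ∈ B n \ B (n + 1) → f w = Sum.inl n) →
        (∀ w : Y, (∀ n, w ∈ B n) → f w = Sum.inr 0) →
        (∀ w : Y, w ∈ adh eta (⨅ n, 𝓟 (B n)) \ ⋃ n, B n → f w = Sum.inr 1) →
        (∀ w : Y, w ∉ ⋃ n, B n → w ∉ adh eta (⨅ n, 𝓟 (B n)) → f w = Sum.inr 2) →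
        f y = Sum.inr 2 ∧ ¬ glim (Sum.inr 2) (F.map f) := by

  classical
  -- Step 1: obtain a countably generated filter `H₀` meshing with `F` with `y ∉ adh eta H₀`.
  have h1 : ∃ H : Filter Y, H.IsCountablyGenerated ∧ Mesh F H ∧ y ∉ adh eta H := by
    by_contra h
    push_neg at h
    exact hy (hpara y F hF fun H hc hm => h H hc hm)
  obtain ⟨H₀, hcg, hmesh, hadh⟩ := h1
  haveI := hcg
  obtain ⟨B', hB'⟩ := H₀.exists_antitone_basis
  have hB'mem : ∀ n, B' n ∈ H₀ := fun n => hB'.toHasBasis.mem_of_mem trivial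
  set B : ℕ → Set Y := fun n => B' n \ {y} with hBdef
  have hBanti : Antitone B := fun m n hmn => Set.diff_subset_diff_left (hB'.antitone hmn)
  -- key meshing property of `B` with `F`
  have key : ∀ A ∈ F, ∀ n, (A ∩ B n).Nonempty := by
    intro A hA n
    by_contra hne
    rw [Set.not_nonempty_iff_eq_empty] at hne
    have hsub : A ∩ B' n ⊆ {y} := by
      intro w hw
      by_contra hwy
      have : w ∈ A ∩ B n := ⟨hw.1, hw.2, hwy⟩
      rw [hne] at this
      exact this
    have hyall : ∀ m, y ∈ B' m := by
      intro m
      obtain ⟨w, hw⟩ := hmesh A hA (B' (max m n)) (hB'mem _)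
      have hw' : w ∈ A ∩ B' n := ⟨hw.1, hB'.antitone (le_max_right m n) hw.2⟩
      have hwy : w = y := hsub hw'
      exact hB'.antitone (le_max_left m n) (hwy ▸ hw.2)
    have hple : pure y ≤ H₀ := by
      intro S hS
      obtain ⟨m, -, hm⟩ := hB'.toHasBasis.mem_iff.mp hS
      exact hm (hyall m)
    exact hadh ⟨pure y, pure_neBot, hple, hconv.2 y⟩
  have hBmem : ∀ n, B n ∈ ⨅ n, 𝓟 (B n) := fun n =>
    mem_iInf_of_mem n (mem_principal_self _)
  have hH'le : (⨅ n, 𝓟 (B n)) ≤ H₀ := by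
    intro S hS
    obtain ⟨m, -, hm⟩ := hB'.toHasBasis.mem_iff.mp hS
    exact mem_of_superset (hBmem m) fun w hw => hm hw.1
  have hadh' : y ∉ adh eta (⨅ n, 𝓟 (B n)) := by
    rintro ⟨G, hG, hle, hlim⟩
    exact hadh ⟨G, hG, hle.trans hH'le, hlim⟩
  have hynot : y ∉ ⋃ n, B n := by
    simp only [Set.mem_iUnion, not_exists]
    intro n hn
    exact hn.2 rfl
  refine ⟨B, fun n => hBanti (Nat.le_succ n), ?_⟩
  intro f hfn hf0 hf1 hf2
  refine ⟨hf2 y hynot hadh', ?_⟩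
  rintro (h | ⟨K, hK, hmem⟩)
  · exact h rfl
  · rw [Filter.mem_map] at hmem
    obtain ⟨N, hN⟩ := hK.bddAbove
    obtain ⟨w, hwA, hwB⟩ := key _ hmem (N + 1)
    -- determine f w
    by_cases hall : ∀ n, w ∈ B n
    · have : f w = Sum.inr 0 := hf0 w hall
      rw [Set.mem_preimage, this] at hwA
      rcases hwA with ⟨k, -, hk⟩ | h2
      · exact absurd hk (by simp)
      · rcases h2 with h2 | h2 <;> simp at h2
    · push_neg at hall
      have hex : ∃ m, w ∉ B m := hall
      set m := Nat.find hex with hmdef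
      have hmspec : w ∉ B m := Nat.find_spec hex
      have hmpos : N + 1 < m := by
        rcases lt_or_ge (N + 1) m with h | h
        · exact h
        · exact absurd (hBanti h hwB) hmspec
      obtain ⟨m', hmeq⟩ : ∃ m', m = m' + 1 := ⟨m - 1, by omega⟩
      have hm' : w ∈ B m' := by
        by_contra hc
        exact absurd (Nat.find_min hex (by omega : m' < m)) (by exact fun h => h hc)
      have hfw : f w = Sum.inl m' := hfn w m' ⟨hm', by rw [← hmeq]; exact hmspec⟩
      rw [Set.mem_preimage, hfw] at hwA
      rcases hwA with ⟨k, hkK, hk⟩ | h2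
      · have hkm : k = m' := Sum.inl.inj hk
        have hkN : k ≤ N := hN hkK
        omega
      · rcases h2 with h2 | h2 <;> simp at h2
end

section
/- Let X and Y be sets such that X is uncountable and card X > card Y. Then for every uniform countably complete ultrafilter U on X and every function f : X → Y there exists a uniform countably complete ultrafilter W on X such that W ≠ U and map f U = map f W (the pushforward filters of U and W under f coincide). -/
open Filter Set

/-- A filter is uniform iff each of its members has the same cardinality as the ground set. -/
def UniformFilter {X : Type*} (F : Filter X) : Prop :=
  ∀ A ∈ F, Cardinal.mk ↥A = Cardinal.mk X

/-- A filter is countably complete iff it is closed under countable intersections. -/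
def CountablyComplete {X : Type*} (F : Filter X) : Prop :=
  ∀ S : Set (Set X), S.Countable → (∀ s ∈ S, s ∈ F) → ⋂₀ S ∈ F

universe u

noncomputable def infEquiv (α : Type u) [Infinite α] : α ≃ α × Bool :=
  (Cardinal.eq.mp (by
    have h2 : Cardinal.mk (α × Bool) = Cardinal.mk α * 2 := by
      simp [Cardinal.mk_prod]
    rw [h2, Cardinal.mul_eq_left (Cardinal.aleph0_le_mk α)
      (le_trans ((by exact_mod_cast Cardinal.nat_lt_aleph0 2 : (2:Cardinal) < Cardinal.aleph0)).le
        (Cardinal.aleph0_le_mk α)) two_ne_zero])).some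

section Aux
variable {X Y : Type u} (f : X → Y)

/-- The chosen pairing equiv on an infinite fiber. -/
noncomputable def fibEquiv (y : Y) (h : (f ⁻¹' {y}).Infinite) :
    ↥(f ⁻¹' {y}) ≃ ↥(f ⁻¹' {y}) × Bool :=
  @infEquiv _ h.to_subtype

open Classical in
noncomputable def gmap : X → X := fun x =>
  if h : (f ⁻¹' {f x}).Infinite then
    ((fibEquiv f (f x) h).symm ((fibEquiv f (f x) h ⟨x, rfl⟩).1,
      !(fibEquiv f (f x) h ⟨x, rfl⟩).2)).1
  else x

open Classical in
noncomputable def bmap : X → Bool := fun x =>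
  if h : (f ⁻¹' {f x}).Infinite then (fibEquiv f (f x) h ⟨x, rfl⟩).2 else false

theorem gmap_eq (y : Y) (h : (f ⁻¹' {y}).Infinite) (x : X) (hx : x ∈ f ⁻¹' {y}) :
    gmap f x = ((fibEquiv f y h).symm ((fibEquiv f y h ⟨x, hx⟩).1,
      !(fibEquiv f y h ⟨x, hx⟩).2)).1 := by
  have hy : f x = y := hx
  subst hy
  simp only [gmap]
  rw [dif_pos h]

theorem bmap_eq (y : Y) (h : (f ⁻¹' {y}).Infinite) (x : X) (hx : x ∈ f ⁻¹' {y}) :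
    bmap f x = (fibEquiv f y h ⟨x, hx⟩).2 := by
  have hy : f x = y := hx
  subst hy
  simp only [bmap]
  rw [dif_pos h]

theorem f_gmap (x : X) : f (gmap f x) = f x := by
  simp only [gmap]
  split
  · exact ((fibEquiv f (f x) ‹_›).symm _).2
  · rfl

theorem gmap_mem (y : Y) (x : X) (hx : x ∈ f ⁻¹' {y}) : gmap f x ∈ f ⁻¹' {y} := by
  have : f x = y := hx
  simpa [this] using f_gmap f x

theorem gmap_invol : Function.Involutive (gmap f) := by
  intro x
  by_cases h : (f ⁻¹' {f x}).Infinite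
  · have hx' : gmap f x ∈ f ⁻¹' {f x} := gmap_mem f (f x) x rfl
    have e1 : gmap f x = ((fibEquiv f (f x) h).symm ((fibEquiv f (f x) h ⟨x, rfl⟩).1,
        !(fibEquiv f (f x) h ⟨x, rfl⟩).2)).1 := gmap_eq f (f x) h x rfl
    have e2 : gmap f (gmap f x) = ((fibEquiv f (f x) h).symm
        ((fibEquiv f (f x) h ⟨gmap f x, hx'⟩).1,
          !(fibEquiv f (f x) h ⟨gmap f x, hx'⟩).2)).1 :=
      gmap_eq f (f x) h (gmap f x) hx'
    have e3 : (⟨gmap f x, hx'⟩ : ↥(f ⁻¹' {f x})) =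
        (fibEquiv f (f x) h).symm ((fibEquiv f (f x) h ⟨x, rfl⟩).1,
          !(fibEquiv f (f x) h ⟨x, rfl⟩).2) := Subtype.ext e1
    rw [e2, e3]
    simp
  · have e1 : gmap f x = x := by simp only [gmap]; rw [dif_neg h]
    rw [e1, e1]

theorem bmap_gmap (x : X) (h : (f ⁻¹' {f x}).Infinite) :
    bmap f (gmap f x) = !bmap f x := by
  have hx' : gmap f x ∈ f ⁻¹' {f x} := gmap_mem f (f x) x rfl
  have e1 : gmap f x = ((fibEquiv f (f x) h).symm ((fibEquiv f (f x) h ⟨x, rfl⟩).1,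
      !(fibEquiv f (f x) h ⟨x, rfl⟩).2)).1 := gmap_eq f (f x) h x rfl
  have e3 : (⟨gmap f x, hx'⟩ : ↥(f ⁻¹' {f x})) =
      (fibEquiv f (f x) h).symm ((fibEquiv f (f x) h ⟨x, rfl⟩).1,
        !(fibEquiv f (f x) h ⟨x, rfl⟩).2) := Subtype.ext e1
  rw [bmap_eq f (f x) h (gmap f x) hx', bmap_eq f (f x) h x rfl, e3]
  simp

end Aux

/-- If `X` is uncountable and `card X > card Y`, then for every uniform countably complete
ultrafilter `U` on `X` and every `f : X → Y`, there is a uniform countably complete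
ultrafilter `W ≠ U` on `X` with the same pushforward under `f`. -/
theorem exists_other_ultrafilter_same_pushforward {X Y : Type u} [Uncountable X]
    (hcard : Cardinal.mk Y < Cardinal.mk X)
    (U : Ultrafilter X) (hU1 : UniformFilter (U : Filter X))
    (hU2 : CountablyComplete (U : Filter X)) (f : X → Y) :
    ∃ W : Ultrafilter X, UniformFilter (W : Filter X) ∧ CountablyComplete (W : Filter X) ∧
      W ≠ U ∧ (U : Filter X).map f = (W : Filter X).map f := by
  classical
  set g : X → X := gmap f with hg
  have hinv : Function.Involutive g := gmap_invol f
  have hbij : Function.Bijective g := hinv.bijective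
  -- the set of points in infinite fibers
  set S : Set X := {x | (f ⁻¹' {f x}).Infinite} with hS
  -- Sᶜ is small
  have hsmall : Cardinal.mk ↥(Sᶜ) < Cardinal.mk X := by
    have hsub : Sᶜ ⊆ ⋃ y : Y, (if (f ⁻¹' {y}).Finite then f ⁻¹' {y} else ∅) := by
      intro x hx
      refine mem_iUnion.mpr ⟨f x, ?_⟩
      have : (f ⁻¹' {f x}).Finite := not_infinite.mp hx
      simp [this]
    calc Cardinal.mk ↥(Sᶜ)
        ≤ Cardinal.mk ↥(⋃ y : Y, (if (f ⁻¹' {y}).Finite then f ⁻¹' {y} else ∅)) :=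
          Cardinal.mk_le_mk_of_subset hsub
      _ ≤ Cardinal.mk Y * ⨆ y : Y, Cardinal.mk ↥(if (f ⁻¹' {y}).Finite then f ⁻¹' {y} else ∅) :=
          Cardinal.mk_iUnion_le _
      _ ≤ Cardinal.mk Y * Cardinal.aleph0 := by
          refine mul_le_mul_right (ciSup_le' fun y => ?_) _
          split
          · exact (Cardinal.mk_le_aleph0_iff.mpr (‹(f ⁻¹' {y}).Finite›.countable))
          · simp
      _ < Cardinal.mk X :=
          Cardinal.mul_lt_of_lt (Cardinal.aleph0_le_mk X) hcard (Cardinal.aleph0_lt_mk (α := X))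
  have hSU : S ∈ U := by
    by_contra h
    have : Sᶜ ∈ U := (Ultrafilter.compl_mem_iff_notMem).mpr h
    have := hU1 _ this
    exact absurd this (ne_of_lt hsmall)
  -- choose the Bool value b with the b-side in U
  have hsplit : (S ∩ bmap f ⁻¹' {false}) ∪ (S ∩ bmap f ⁻¹' {true}) = S := by
    ext x
    simp only [mem_union, mem_inter_iff, mem_preimage, mem_singleton_iff]
    constructor
    · rintro (⟨h1, _⟩ | ⟨h1, _⟩) <;> exact h1
    · intro h1
      rcases Bool.dichotomy (bmap f x) with hb | hb
      · exact Or.inl ⟨h1, hb⟩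
      · exact Or.inr ⟨h1, hb⟩
  have hone : (S ∩ bmap f ⁻¹' {false}) ∈ U ∨ (S ∩ bmap f ⁻¹' {true}) ∈ U := by
    rw [← Ultrafilter.union_mem_iff, hsplit]; exact hSU
  obtain ⟨b, hbU⟩ : ∃ b : Bool, S ∩ bmap f ⁻¹' {b} ∈ U := by
    rcases hone with h | h
    · exact ⟨false, h⟩
    · exact ⟨true, h⟩
  refine ⟨Ultrafilter.map g U, ?_, ?_, ?_, ?_⟩
  · -- uniform
    intro A hA
    have hA' : g ⁻¹' A ∈ U := hA
    have h1 : Cardinal.mk ↥(g ⁻¹' A) = Cardinal.mk X := hU1 _ hA'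
    have heq : g ⁻¹' A = g '' A := by
      ext x
      constructor
      · intro hx; exact ⟨g x, hx, hinv x⟩
      · rintro ⟨a, ha, rfl⟩; simpa [hinv a] using ha
    rw [← h1, heq, Cardinal.mk_image_eq hbij.injective]
  · -- countably complete
    intro T hTc hTm
    have : g ⁻¹' ⋂₀ T = ⋂₀ ((fun s => g ⁻¹' s) '' T) := by
      rw [sInter_image, preimage_sInter]
    show g ⁻¹' ⋂₀ T ∈ U
    rw [this]
    exact hU2 _ (hTc.image _) (by rintro s ⟨t, ht, rfl⟩; exact hTm t ht)
  · -- W ≠ U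
    intro hWU
    have hmem : S ∩ bmap f ⁻¹' {b} ∈ Ultrafilter.map g U := by
      rw [hWU]; exact hbU
    have hpre : g ⁻¹' (S ∩ bmap f ⁻¹' {b}) ∈ U := hmem
    have hint : (g ⁻¹' (S ∩ bmap f ⁻¹' {b})) ∩ (S ∩ bmap f ⁻¹' {b}) ∈ U :=
      inter_mem hpre hbU
    obtain ⟨x, ⟨hx1, hx2⟩⟩ := Ultrafilter.nonempty_of_mem hint
    obtain ⟨hxS, hxb⟩ := hx2
    have hgb : bmap f (g x) = b := hx1.2
    have : bmap f (g x) = !bmap f x := bmap_gmap f x hxS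
    rw [this, hxb] at hgb
    simp at hgb
  · -- same pushforward
    have : f ∘ g = f := funext (f_gmap f)
    rw [Ultrafilter.coe_map, Filter.map_map, this]
end

section
/- Let X be an uncountable set, U a uniform countably complete ultrafilter on X, and x_∞ ∈ X. Define a relation ξ = ξ(U, x_∞) between points of X and proper filters on X by: for x ≠ x_∞, x ∈ lim_ξ F iff F = pure x; and x_∞ ∈ lim_ξ F iff ⋂F ⊆ {x_∞} (the intersection of all members of F is contained in {x_∞}) and F ⊄ U (some member of F does not belong to U). Then ξ is a convergence on X and moreover ξ is a hypotopology. -/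
open Filter Set

/-- A hypotopology: a convergence that is adherence-determined with respect to
countably complete filters. -/
def IsHypotopology {X : Type*} (lim : X → Filter X → Prop) : Prop :=
  ∀ (x : X) (F : Filter X), F.NeBot →
    (∀ H : Filter X, CountablyComplete H → Mesh F H → x ∈ adh lim H) → lim x F

/-- The convergence `ξ(U, x∞)` on `X`: for `x ≠ x∞`, only `pure x` converges to `x`;
and a filter `F` converges to `x∞` iff `⋂ F ⊆ {x∞}` and some member of `F` is not in `U`. -/
def xiU {X : Type*} (U : Ultrafilter X) (xinf : X) (x : X) (F : Filter X) : Prop :=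
  (x ≠ xinf ∧ F = pure x) ∨ (x = xinf ∧ F.ker ⊆ {xinf} ∧ ∃ A ∈ F, A ∉ U)

/-- For `X` uncountable, `U` a uniform countably complete ultrafilter on `X` and
`x∞ ∈ X`, the relation `ξ(U, x∞)` is a convergence on `X` and moreover a hypotopology. -/
theorem xiU_isConvergence_isHypotopology {X : Type*} [Uncountable X]
    (U : Ultrafilter X) (hU1 : UniformFilter (U : Filter X))
    (hU2 : CountablyComplete (U : Filter X)) (xinf : X) :
    IsConvergence (xiU U xinf) ∧ IsHypotopology (xiU U xinf) := by
  -- singletons are not in U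
  have hsing : ∀ y : X, {y} ∉ U := by
    intro y hy
    have h1 : Cardinal.mk ↥({y} : Set X) = Cardinal.mk X := hU1 _ hy
    rw [Cardinal.mk_singleton] at h1
    have h2 : Cardinal.aleph0 < Cardinal.mk X := @Cardinal.aleph0_lt_mk X _
    rw [← h1] at h2
    exact absurd (lt_trans Cardinal.one_lt_aleph0 h2) (lt_irrefl _)
  -- principal filters are countably complete
  have hprinCC : ∀ A : Set X, CountablyComplete (𝓟 A) := by
    intro A S _ hS
    exact mem_principal.mpr (subset_sInter fun s hs => mem_principal.mp (hS s hs))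
  constructor
  · constructor
    · rintro x F G hG hle (⟨hx, rfl⟩ | ⟨rfl, hker, A, hA, hAU⟩)
      · exact Or.inl ⟨hx, hG.le_pure_iff.mp hle⟩
      · exact Or.inr ⟨rfl, (Filter.ker_mono hle).trans hker, A, hle hA, hAU⟩
    · intro x
      by_cases hx : x = xinf
      · subst hx
        exact Or.inr ⟨rfl, by simp [Filter.ker_pure], {x}, singleton_mem_pure,
          hsing x⟩
      · exact Or.inl ⟨hx, rfl⟩
  · intro x F hF hadh
    by_cases hx : x = xinf
    · subst hx
      refine Or.inr ⟨rfl, ?_, ?_⟩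
      · -- ker F ⊆ {xinf}
        intro y hy
        have hyF : ∀ A ∈ F, y ∈ A := fun A hA => Filter.mem_ker.mp hy A hA
        have hmesh : Mesh F (𝓟 {y}) := by
          intro A hA B hB
          exact ⟨y, hyF A hA, mem_principal.mp hB rfl⟩
        obtain ⟨G, hGne, hGle, hGlim⟩ := hadh _ (hprinCC {y}) hmesh
        rw [Filter.principal_singleton] at hGle
        have hGeq : G = pure y := hGne.le_pure_iff.mp hGle
        subst hGeq
        rcases hGlim with ⟨hne, _⟩ | ⟨_, hker, _⟩
        · exact absurd rfl hne
        · rw [Filter.ker_pure] at hker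
          exact hker rfl
      · -- ∃ A ∈ F, A ∉ U
        by_contra h
        push_neg at h
        have hmesh : Mesh F (↑U) := by
          intro A hA B hB
          exact Filter.nonempty_of_mem (U.toFilter.inter_mem (h A hA) hB)
        obtain ⟨G, hGne, hGle, hGlim⟩ := hadh _ hU2 hmesh
        have hGeq : G = ↑U := U.unique hGle
        subst hGeq
        rcases hGlim with ⟨hne, _⟩ | ⟨_, _, A, hA, hAU⟩
        · exact absurd rfl hne
        · exact hAU hA
    · -- x ≠ xinf : show F = pure x
      have hxmem : ∀ A ∈ F, x ∈ A := by
        intro A hA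
        have hmesh : Mesh F (𝓟 A) := by
          intro B hB C hC
          have : (B ∩ A).Nonempty := Filter.nonempty_of_mem (F.inter_mem hB hA)
          exact this.mono (inter_subset_inter_right _ (mem_principal.mp hC))
        obtain ⟨G, hGne, hGle, hGlim⟩ := hadh _ (hprinCC A) hmesh
        rcases hGlim with ⟨_, rfl⟩ | ⟨hxe, _⟩
        · exact mem_pure.mp (hGle (mem_principal_self A))
        · exact absurd hxe hx
      have hsx : {x} ∈ F := by
        by_contra hsx
        have hmesh : Mesh F (𝓟 {x}ᶜ) := by
          intro B hB C hC
          have hBne : (B ∩ {x}ᶜ).Nonempty := by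
            rcases (B ∩ {x}ᶜ).eq_empty_or_nonempty with he | hne
            · exfalso
              apply hsx
              have hBsub : B ⊆ {x} := by
                intro b hb
                by_contra hbx
                exact absurd he (Nonempty.ne_empty ⟨b, hb, hbx⟩)
              exact Filter.mem_of_superset hB hBsub
            · exact hne
          exact hBne.mono (inter_subset_inter_right _ (mem_principal.mp hC))
        obtain ⟨G, hGne, hGle, hGlim⟩ := hadh _ (hprinCC {x}ᶜ) hmesh
        rcases hGlim with ⟨_, rfl⟩ | ⟨hxe, _⟩
        · exact (mem_pure.mp (hGle (mem_principal_self _))) rfl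
        · exact absurd hxe hx
      exact Or.inl ⟨hx, le_antisymm (Filter.le_pure_iff.mpr hsx)
        (fun A hA => hxmem A hA)⟩
end

section
/- Let X be an uncountable set, U a uniform countably complete ultrafilter on X, x_∞ ∈ X, and let ξ = ξ(U, x_∞) be the convergence on X defined by: for x ≠ x_∞, x ∈ lim_ξ F iff F = pure x; and x_∞ ∈ lim_ξ F iff ⋂F ⊆ {x_∞} and some member of F does not belong to U. Then lim_ξ U = ∅, and for every free ultrafilter W on X with W ≠ U one has x_∞ ∈ lim_ξ W. -/
open Filter Set

/-- For the convergence `ξ(U, x∞)`: `lim_ξ U = ∅`, and every free ultrafilter `W ≠ U`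
converges to `x∞`. -/
theorem xiU_lim_U_empty_and_free_converges {X : Type*} [Uncountable X]
    (U : Ultrafilter X) (hU1 : UniformFilter (U : Filter X))
    (hU2 : CountablyComplete (U : Filter X)) (xinf : X) :
    {x : X | xiU U xinf x (U : Filter X)} = ∅ ∧
    ∀ W : Ultrafilter X, (∀ A : Set X, A.Finite → A ∉ W) → W ≠ U →
      xiU U xinf xinf (W : Filter X) := by
  constructor
  · ext x
    simp only [Set.mem_setOf_eq, Set.mem_empty_iff_false, iff_false]
    rintro (⟨hx, hpure⟩ | ⟨hx, hker, A, hA, hA'⟩)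
    · have h1 : ({x} : Set X) ∈ (U : Filter X) := by
        rw [hpure]; exact mem_pure.2 rfl
      have h2 := hU1 _ h1
      rw [Cardinal.mk_singleton] at h2
      have h3 : Cardinal.aleph0 < Cardinal.mk X := Cardinal.aleph0_lt_mk
      rw [← h2] at h3
      exact absurd h3 (not_lt.2 Cardinal.one_le_aleph0)
    · exact hA' hA
  · intro W hfree hne
    refine Or.inr ⟨rfl, ?_, ?_⟩
    · intro x hx
      have hc : ({x}ᶜ : Set X) ∈ (W : Filter X) :=
        Ultrafilter.compl_mem_iff_notMem.2 (hfree {x} (Set.finite_singleton x))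
      exact absurd (Filter.mem_ker.1 hx _ hc) (by simp)
    · by_contra h
      push_neg at h
      apply hne
      exact (Ultrafilter.coe_le_coe.1 (fun A hA => h A hA)).symm
end

section
/- Let η be any convergence on a set Y. Let X be an uncountable set with card X > card Y carrying a uniform countably complete ultrafilter U, let x_∞ ∈ X, and let ξ = ξ(U, x_∞) be the hypotopology on X defined by: for x ≠ x_∞, x ∈ lim_ξ F iff F = pure x; and x_∞ ∈ lim_ξ F iff ⋂F ⊆ {x_∞} and some member of F does not belong to U. Then x_∞ ∉ lim_ξ U, yet for every function f : X → Y that is continuous from ξ to η one has f(x_∞) ∈ lim_η (map f U). Consequently ξ ≠ ⋂_{f ∈ C(ξ,η)} f⁻η, so η is not initially dense in the class of hypotopologies. -/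
open Filter Set

universe u

/-- No convergence `η` is initially dense in the class of hypotopologies, witnessed by
the hypotopology `ξ = ξ(U, x∞)` on an uncountable set `X` with `card X > card Y` carrying
a uniform countably complete ultrafilter `U`: `x∞ ∉ lim_ξ U`, yet `f x∞ ∈ lim_η (map f U)`
for every map `f` continuous from `ξ` to `η`; consequently `ξ ≠ ⋂_{f ∈ C(ξ,η)} f⁻η`, and
no set of continuous maps to `η` recovers `ξ` initially. -/
theorem hypotopologies_not_simple_witness {X Y : Type u} [Uncountable X]
    (hcard : Cardinal.mk Y < Cardinal.mk X)
    (eta : Y → Filter Y → Prop) (heta : IsConvergence eta)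
    (U : Ultrafilter X) (hU1 : UniformFilter (U : Filter X))
    (hU2 : CountablyComplete (U : Filter X)) (xinf : X) :
    ¬ xiU U xinf xinf (U : Filter X) ∧
    (∀ f : X → Y, ContinuousConv (xiU U xinf) eta f →
      eta (f xinf) ((U : Filter X).map f)) ∧
    ¬ (∀ (x : X) (F : Filter X), F.NeBot →
        (xiU U xinf x F ↔
          ∀ f : X → Y, ContinuousConv (xiU U xinf) eta f → eta (f x) (F.map f))) ∧
    ¬ ∃ A : Set (X → Y), (∀ f ∈ A, ContinuousConv (xiU U xinf) eta f) ∧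
        ∀ (x : X) (F : Filter X), F.NeBot →
          (xiU U xinf x F ↔ ∀ f ∈ A, eta (f x) (F.map f)) := by

  classical
  have hX : Nonempty X := inferInstance
  have hne : ¬ xiU U xinf xinf (U : Filter X) := by
    rintro (⟨hx, _⟩ | ⟨_, _, A, hA, hA'⟩)
    · exact hx rfl
    · exact hA' hA
  have key : ∀ f : X → Y, ContinuousConv (xiU U xinf) eta f →
      eta (f xinf) ((U : Filter X).map f) := by
    intro f hf
    by_cases hc : ∃ y : Y, f ⁻¹' {y} ∈ U
    · -- some fiber belongs to U
      obtain ⟨y0, hy0⟩ := hc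
      have hPcard : Cardinal.mk (f ⁻¹' {y0}) = Cardinal.mk X := hU1 _ hy0
      have hPinf : (f ⁻¹' {y0} : Set X).Infinite := by
        rw [← Set.infinite_coe_iff]
        refine Cardinal.infinite_iff.mpr ?_
        rw [hPcard]
        exact Cardinal.infinite_iff.mp inferInstance
      obtain e := hPinf.natEmbedding
      set φ : ℕ → X := fun n => (e n : X) with hφdef
      have hφinj : Function.Injective φ := fun a b hab => e.injective (Subtype.ext hab)
      have hφmem : ∀ n, f (φ n) = y0 := fun n => (e n).2
      set F0 : Filter X := Filter.map φ Filter.atTop with hF0def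
      have hF0 : F0.NeBot := Filter.map_neBot
      have hle : F0 ≤ Filter.cofinite := by
        rw [hF0def, ← Nat.cofinite_eq_atTop]
        exact hφinj.tendsto_cofinite
      have hker : F0.ker ⊆ {xinf} := by
        intro x hx
        exfalso
        have h1 : ({x}ᶜ : Set X) ∈ F0 := hle (Set.finite_singleton x).compl_mem_cofinite
        exact (Filter.mem_ker.mp hx _ h1) rfl
      have hAF0 : Set.range φ ∈ F0 := by
        rw [hF0def, Filter.mem_map]
        exact Filter.univ_mem' (fun n => ⟨n, rfl⟩)
      have hAU : Set.range φ ∉ U := by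
        intro hmem
        have h1 : Cardinal.mk (Set.range φ) = Cardinal.mk X := hU1 _ hmem
        have h2 : Cardinal.mk (Set.range φ) ≤ Cardinal.aleph0 := (Set.countable_range φ).le_aleph0
        have h3 : Cardinal.aleph0 < Cardinal.mk X := Cardinal.aleph0_lt_mk
        exact absurd (h1 ▸ h2) (not_le.mpr h3)
      have hxi : xiU U xinf xinf F0 := Or.inr ⟨rfl, hker, Set.range φ, hAF0, hAU⟩
      have heta' : eta (f xinf) (F0.map f) := hf xinf F0 hF0 hxi
      have hmaple : (U : Filter X).map f ≤ F0.map f := by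
        intro S hS
        rw [Filter.mem_map] at hS ⊢
        rw [hF0def, Filter.mem_map] at hS
        obtain ⟨N, hN⟩ := Filter.mem_atTop_sets.mp hS
        have hy0S : y0 ∈ S := by
          have := hN N le_rfl
          rwa [Set.mem_preimage, Set.mem_preimage, hφmem N] at this
        exact Filter.mem_of_superset hy0 (fun z hz => by
          rw [Set.mem_preimage] at hz ⊢
          rw [hz]; exact hy0S)
      exact heta.1 (f xinf) (F0.map f) ((U : Filter X).map f) Filter.map_neBot hmaple heta'
    · -- no fiber belongs to U
      push_neg at hc
      set h0 : Y → X := fun y => if hy : ∃ x, f x = y then hy.choose else Classical.arbitrary X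
        with hh0def
      set g : X → X := fun x => h0 (f x) with hgdef
      have hg : ∀ x, f (g x) = f x := by
        intro x
        have hex : ∃ x', f x' = f x := ⟨x, rfl⟩
        simp only [hgdef, hh0def, dif_pos hex]
        exact hex.choose_spec
      set F0 : Filter X := Filter.map g (U : Filter X) with hF0def
      have hF0 : F0.NeBot := Filter.map_neBot
      have hker : F0.ker ⊆ {xinf} := by
        intro x hx
        exfalso
        have hsub : g ⁻¹' {x} ⊆ f ⁻¹' {f x} := by
          intro z hz
          rw [Set.mem_preimage, Set.mem_singleton_iff] at hz ⊢
          rw [← hg z, hz]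
        have h1 : g ⁻¹' {x} ∉ U := fun h => hc (f x) (Filter.mem_of_superset h hsub)
        have h2 : (g ⁻¹' {x})ᶜ ∈ U := (Ultrafilter.compl_mem_iff_notMem).mpr h1
        have h3 : ({x}ᶜ : Set X) ∈ F0 := by
          rw [hF0def, Filter.mem_map]
          exact h2
        exact (Filter.mem_ker.mp hx _ h3) rfl
      have hAF0 : Set.range g ∈ F0 := by
        rw [hF0def, Filter.mem_map]
        exact Filter.univ_mem' (fun x => ⟨x, rfl⟩)
      have hAU : Set.range g ∉ U := by
        intro hmem
        have h1 : Cardinal.mk (Set.range g) = Cardinal.mk X := hU1 _ hmem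
        have h2 : Cardinal.mk (Set.range g) ≤ Cardinal.mk (Set.range h0) :=
          Cardinal.mk_le_mk_of_subset (by rintro _ ⟨x, rfl⟩; exact ⟨f x, rfl⟩)
        have h3 : Cardinal.mk (Set.range h0) ≤ Cardinal.mk Y := Cardinal.mk_range_le
        exact absurd (h1 ▸ (h2.trans h3)) (not_le.mpr hcard)
      have hxi : xiU U xinf xinf F0 := Or.inr ⟨rfl, hker, Set.range g, hAF0, hAU⟩
      have heta' : eta (f xinf) (F0.map f) := hf xinf F0 hF0 hxi
      have heq : F0.map f = (U : Filter X).map f := by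
        rw [hF0def, Filter.map_map]
        congr 1
        funext x
        exact hg x
      rwa [heq] at heta'
  refine ⟨hne, key, ?_, ?_⟩
  · intro hall
    exact hne ((hall xinf (U : Filter X) inferInstance).mpr key)
  · rintro ⟨A, hAcont, hAiff⟩
    exact hne ((hAiff xinf (U : Filter X) inferInstance).mpr
      (fun f hfA => key f (hAcont f hfA)))
end

section
/- Let X := (ℕ × ℕ) ⊕ ℕ ⊕ Unit, with Xₙ := {n} × ℕ (the pairwise disjoint countably infinite sets), yₙ the n-th point of the middle summand, and z the point of the last summand. Define a convergence ξ on X by declaring, for proper filters F: x ∈ lim_ξ F iff every ultrafilter finer than F converges to x, where an ultrafilter V converges to a point x ∈ ⋃ₙ Xₙ iff V = pure x; V converges to yₙ iff V = pure yₙ or V refines the cofinite filter on Xₙ; and V converges to z iff V = pure z, or V refines the cofinite filter on {yₙ : n ∈ ω}, or there is a sequence (xₙ)ₙ with xₙ ∈ Xₙ for each n such that V refines the cofinite filter on {xₙ : n ∈ ω}. Then ξ is a convergence, ξ is a pseudotopology, and ξ is Hausdorff: every proper filter on X has at most one ξ-limit. -/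
open Filter Set

/-- A pseudotopology: a filter converges to `x` as soon as every finer ultrafilter does. -/
def IsPseudotopology {X : Type*} (lim : X → Filter X → Prop) : Prop :=
  ∀ (x : X) (F : Filter X), F.NeBot →
    (∀ V : Ultrafilter X, (V : Filter X) ≤ F → lim x (V : Filter X)) → lim x F

/-- The ground set `X := (ℕ × ℕ) ⊕ ℕ ⊕ Unit`. -/
abbrev Xsp : Type := (ℕ × ℕ) ⊕ (ℕ ⊕ Unit)

/-- `Xₙ := {n} × ℕ`, the `n`-th countably infinite set. -/
def Xn (n : ℕ) : Set Xsp := {x | ∃ k : ℕ, x = Sum.inl (n, k)}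

/-- `yₙ`, the `n`-th point of the middle summand. -/
def ypt (n : ℕ) : Xsp := Sum.inr (Sum.inl n)

/-- `z`, the point of the last summand. -/
def zpt : Xsp := Sum.inr (Sum.inr ())

/-- The set `{yₙ : n ∈ ω}`. -/
def Yset : Set Xsp := Set.range ypt

/-- The cofinite filter on a subset `A ⊆ X`: generated by the sets `A \ K`, `K` finite. -/
def cofinOn {X : Type*} (A : Set X) : Filter X :=
  ⨅ K ∈ {K : Set X | K.Finite}, 𝓟 (A \ K)

/-- Convergence of ultrafilters: `V` converges to `x ∈ ⋃ₙ Xₙ` iff `V = pure x`;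
`V` converges to `yₙ` iff `V = pure yₙ` or `V` refines the cofinite filter on `Xₙ`;
`V` converges to `z` iff `V = pure z`, or `V` refines the cofinite filter on `{yₙ : n ∈ ω}`,
or `V` refines the cofinite filter on `{xₙ : n ∈ ω}` for some sequence with `xₙ ∈ Xₙ`. -/
def uconv (V : Ultrafilter Xsp) : Xsp → Prop
  | Sum.inl p => V = pure (Sum.inl p)
  | Sum.inr (Sum.inl n) =>
      V = pure (ypt n) ∨ (V : Filter Xsp) ≤ cofinOn (Xn n)
  | Sum.inr (Sum.inr _) =>
      V = pure zpt ∨ (V : Filter Xsp) ≤ cofinOn Yset ∨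
        ∃ s : ℕ → Xsp, (∀ n, s n ∈ Xn n) ∧ (V : Filter Xsp) ≤ cofinOn (Set.range s)

/-- The convergence `ξ` on `Xsp`: a proper filter converges to `x` iff every
ultrafilter finer than it converges to `x`. -/
def xconv (x : Xsp) (F : Filter Xsp) : Prop :=
  ∀ V : Ultrafilter Xsp, (V : Filter Xsp) ≤ F → uconv V x


lemma mem_cofinOn {X : Type*} {A K : Set X} (hK : K.Finite) : A \ K ∈ cofinOn A :=
  mem_iInf_of_mem K (mem_iInf_of_mem hK (mem_principal_self _))

lemma not_pure_le_cofinOn {X : Type*} {A : Set X} (a : X) :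
    ¬ (pure a : Filter X) ≤ cofinOn A := by
  intro h
  have := h (mem_cofinOn (finite_singleton a))
  simp [mem_pure] at this

lemma not_upure_le_cofinOn {A : Set Xsp} (a : Xsp) :
    ¬ ((pure a : Ultrafilter Xsp) : Filter Xsp) ≤ cofinOn A := by
  rw [Ultrafilter.coe_pure]; exact not_pure_le_cofinOn a

lemma cofin_disj {X : Type*} {A B : Set X} (V : Ultrafilter X)
    (hA : (V : Filter X) ≤ cofinOn A) (hB : (V : Filter X) ≤ cofinOn B)
    (h : (A ∩ B).Finite) : False := by
  have h1 : A \ (A ∩ B) ∈ V := hA (mem_cofinOn h)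
  have h2 : B \ (∅ : Set X) ∈ V := hB (mem_cofinOn finite_empty)
  have h3 : (A \ (A ∩ B)) ∩ (B \ ∅) = ∅ := by
    ext x
    simp only [mem_inter_iff, mem_diff, mem_empty_iff_false, iff_false, mem_inter_iff]
    tauto
  have := inter_mem h1 h2
  rw [h3] at this
  exact V.neBot.ne (empty_mem_iff_bot.1 this)

lemma pure_eq_aux {a b : Xsp} (h : (pure a : Ultrafilter Xsp) = pure b) : a = b := by
  have h2 : (pure a : Filter Xsp) = pure b := by
    have := congrArg (fun U : Ultrafilter Xsp => (U : Filter Xsp)) h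
    simpa using this
  exact Filter.pure_injective h2

lemma Xn_inter_Xn {n m : ℕ} (h : n ≠ m) : Xn n ∩ Xn m = ∅ := by
  ext x
  simp only [Xn, mem_inter_iff, mem_setOf_eq, mem_empty_iff_false, iff_false]
  rintro ⟨⟨k, rfl⟩, ⟨k', hk'⟩⟩
  injection hk' with hp
  injection hp with h1 h2
  exact h h1

lemma Xn_inter_Yset {n : ℕ} : Xn n ∩ Yset = ∅ := by
  ext x
  simp only [Xn, Yset, ypt, mem_inter_iff, mem_setOf_eq, mem_range,
    mem_empty_iff_false, iff_false]
  rintro ⟨⟨k, rfl⟩, ⟨m, hm⟩⟩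
  exact Sum.inr_ne_inl hm

lemma Xn_inter_range {n : ℕ} {s : ℕ → Xsp} (hs : ∀ m, s m ∈ Xn m) :
    Xn n ∩ Set.range s ⊆ {s n} := by
  rintro x ⟨⟨k, rfl⟩, ⟨m, hm⟩⟩
  obtain ⟨k', hk'⟩ := hs m
  rw [hk'] at hm
  injection hm with hp
  injection hp with h1 h2
  subst h1; subst h2
  exact mem_singleton_iff.2 hk'.symm

lemma Yset_inter_range {s : ℕ → Xsp} (hs : ∀ m, s m ∈ Xn m) :
    Yset ∩ Set.range s = ∅ := by
  ext x
  simp only [Yset, ypt, mem_inter_iff, mem_range, mem_empty_iff_false, iff_false]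
  rintro ⟨⟨m, rfl⟩, ⟨k, hk⟩⟩
  obtain ⟨k', hk'⟩ := hs k
  rw [hk'] at hk
  exact Sum.inl_ne_inr hk

lemma uconv_pure {a x : Xsp} (h : uconv (pure a) x) : x = a := by
  cases x with
  | inl p => exact (pure_eq_aux h).symm
  | inr q =>
    cases q with
    | inl n =>
      rcases h with h | h
      · exact (pure_eq_aux h).symm
      · exact absurd h (not_upure_le_cofinOn a)
    | inr u =>
      cases u
      rcases h with h | h | ⟨s, _, h⟩
      · exact (pure_eq_aux h).symm
      · exact absurd h (not_upure_le_cofinOn a)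
      · exact absurd h (not_upure_le_cofinOn a)

lemma uconv_unique {V : Ultrafilter Xsp} {x y : Xsp} (hx : uconv V x) (hy : uconv V y) :
    x = y := by
  cases x with
  | inl p =>
    rw [show V = pure (Sum.inl p) from hx] at hy
    exact (uconv_pure hy).symm
  | inr q =>
    cases q with
    | inl n =>
      rcases hx with h | hx
      · rw [h] at hy; exact (uconv_pure hy).symm
      · cases y with
        | inl q =>
          rw [show V = pure (Sum.inl q) from hy] at hx
          exact absurd hx (not_upure_le_cofinOn _)
        | inr r =>
          cases r with
          | inl m =>
            rcases hy with h | hy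
            · rw [h] at hx; exact absurd hx (not_upure_le_cofinOn _)
            · rcases eq_or_ne n m with rfl | hne
              · rfl
              · exact absurd (Xn_inter_Xn hne ▸ finite_empty)
                  (fun hf => cofin_disj V hx hy hf)
          | inr u =>
            rcases hy with h | hy | ⟨s, hs, hy⟩
            · rw [h] at hx; exact absurd hx (not_upure_le_cofinOn _)
            · exact absurd (Xn_inter_Yset ▸ finite_empty)
                (fun hf => cofin_disj V hx hy hf)
            · exact absurd ((finite_singleton (s n)).subset (Xn_inter_range hs))
                (fun hf => cofin_disj V hx hy hf)
    | inr u =>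
      cases u
      rcases hx with h | hx | ⟨s, hs, hx⟩
      · rw [h] at hy; exact (uconv_pure hy).symm
      · cases y with
        | inl q =>
          rw [show V = pure (Sum.inl q) from hy] at hx
          exact absurd hx (not_upure_le_cofinOn _)
        | inr r =>
          cases r with
          | inl m =>
            rcases hy with h | hy
            · rw [h] at hx; exact absurd hx (not_upure_le_cofinOn _)
            · exact absurd ((Xn_inter_Yset (n := m)) ▸ finite_empty)
                (fun hf => cofin_disj V hy hx hf)
          | inr u' => cases u'; rfl
      · cases y with
        | inl q =>
          rw [show V = pure (Sum.inl q) from hy] at hx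
          exact absurd hx (not_upure_le_cofinOn _)
        | inr r =>
          cases r with
          | inl m =>
            rcases hy with h | hy
            · rw [h] at hx; exact absurd hx (not_upure_le_cofinOn _)
            · exact absurd ((finite_singleton (s m)).subset (Xn_inter_range hs))
                (fun hf => cofin_disj V hy hx hf)
          | inr u' => cases u'; rfl

/-- `ξ` is a convergence on `X = (ℕ × ℕ) ⊕ ℕ ⊕ Unit`, a pseudotopology, and Hausdorff:
every proper filter has at most one limit. -/
theorem xconv_isConvergence_pseudotopology_hausdorff :
    IsConvergence xconv ∧ IsPseudotopology xconv ∧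
    (∀ F : Filter Xsp, F.NeBot → ∀ x y : Xsp, xconv x F → xconv y F → x = y) := by
  refine ⟨⟨fun x F G hG hle h V hV => h V (hV.trans hle), fun x V hV => ?_⟩,
    fun x F _ h V hV => h V hV V le_rfl, fun F hF x y hx hy => ?_⟩
  · have hVp : V = pure x := by
      apply Ultrafilter.coe_injective
      rw [Ultrafilter.coe_pure]
      exact (V.neBot.le_pure_iff).1 hV
    rw [hVp]
    cases x with
    | inl p => rfl
    | inr q =>
      cases q with
      | inl n => exact Or.inl rfl
      | inr u => cases u; exact Or.inl rfl
  · obtain ⟨V, hV⟩ := Ultrafilter.exists_le F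
    exact uconv_unique (hx V hV) (hy V hV)
end

section
/- There exists a set X and a convergence ξ on X such that: (i) ξ is Hausdorff (every proper filter on X has at most one ξ-limit); (ii) ξ is subdiagonal (adh_ξ(adh_ξ A) = adh_ξ A for every subset A ⊆ X); and (iii) ξ is not weakly diagonal, i.e., there exists a filter F on X with adh_ξ(adh_ξ F) ≠ adh_ξ F, where adh_ξ(adh_ξ F) denotes the adherence of the principal filter of the set adh_ξ F. -/
open Filter Set

/-- Adherence of a set: the adherence of its principal filter. -/
def adhSet {X : Type*} (lim : X → Filter X → Prop) (A : Set X) : Set X :=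
  adh lim (𝓟 A)

namespace HSNWD

/-- The ground type: ground points `ℕ × ℕ`, middle points `ℕ`, one top point. -/
abbrev XX : Type := (ℕ × ℕ) ⊕ (ℕ ⊕ Unit)

def z (p : ℕ × ℕ) : XX := Sum.inl p
def yy (i : ℕ) : XX := Sum.inr (Sum.inl i)
def cc : XX := Sum.inr (Sum.inr ())

@[simp] lemma z_ne_yy (p i) : z p ≠ yy i := by simp [z, yy]
@[simp] lemma z_ne_cc (p) : z p ≠ cc := by simp [z, cc]
@[simp] lemma yy_ne_cc (i) : yy i ≠ cc := by simp [yy, cc]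
@[simp] lemma z_inj {p q} : z p = z q ↔ p = q := by simp [z]
@[simp] lemma yy_inj {i j} : yy i = yy j ↔ i = j := by simp [yy]

/-- The cofinite filter on the `i`-th column, converging to `yy i`. -/
def V (i : ℕ) : Filter XX := Filter.map (fun m => z (i, m)) Filter.cofinite

/-- Tail sets for the filters converging to `cc`. -/
def C (f : ℕ → ℕ) (N : ℕ) : Set XX :=
  {x | ∃ k, N ≤ k ∧ (x = yy k ∨ x = z (k, f k))}

/-- For each `f : ℕ → ℕ`, a filter converging to `cc`. -/
def H (f : ℕ → ℕ) : Filter XX := ⨅ N, 𝓟 (C f N)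

/-- The convergence relation. -/
def lm (x : XX) (G : Filter XX) : Prop :=
  G ≤ pure x ∨ (∃ i, x = yy i ∧ G ≤ V i) ∨ (x = cc ∧ ∃ f, G ≤ H f)

lemma C_antitone (f : ℕ → ℕ) {N M : ℕ} (h : N ≤ M) : C f M ⊆ C f N := by
  rintro x ⟨k, hk, hx⟩; exact ⟨k, h.trans hk, hx⟩

lemma mem_H {f : ℕ → ℕ} {s : Set XX} : s ∈ H f ↔ ∃ N, C f N ⊆ s := by
  rw [H, mem_iInf_of_directed]
  · simp [Filter.mem_principal]
  · intro N M
    exact ⟨max N M, principal_mono.2 (C_antitone f (le_max_left _ _)),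
      principal_mono.2 (C_antitone f (le_max_right _ _))⟩

lemma C_mem_H (f : ℕ → ℕ) (N : ℕ) : C f N ∈ H f :=
  mem_iInf_of_mem N (mem_principal_self _)

lemma mem_V {i : ℕ} {s : Set XX} : s ∈ V i ↔ {m | z (i, m) ∈ s} ∈ Filter.cofinite := Iff.rfl

/-- The `i`-th column. -/
def col (i : ℕ) : Set XX := {w | ∃ m, w = z (i, m)}

lemma col_mem_V (i : ℕ) : col i ∈ V i := by
  rw [mem_V]
  have : {m | z (i, m) ∈ col i} = univ := by
    ext m; simp [col]
  simp [this]

/-- Every point is excluded by some member of `V i`. -/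
lemma V_free (i : ℕ) (x : XX) : ∃ s ∈ V i, x ∉ s := by
  refine ⟨col i \ {x}, ?_, by simp⟩
  rw [mem_V]
  have hsub : {m | z (i, m) ∈ col i \ {x}}ᶜ ⊆ {m | z (i, m) = x} := by
    intro m hm
    simp only [mem_compl_iff, mem_setOf_eq, mem_diff, mem_singleton_iff, not_and, not_not] at hm
    exact hm ⟨m, rfl⟩
  have hfin : {m | z (i, m) = x}.Finite := by
    apply Subsingleton.finite
    intro a ha b hb
    have : z (i, a) = z (i, b) := by rw [ha, hb]
    simpa using this
  exact Filter.mem_cofinite.2 (hfin.subset hsub)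

/-- Every point is excluded by some member of `H f`. -/
lemma H_free (f : ℕ → ℕ) (x : XX) : ∃ s ∈ H f, x ∉ s := by
  obtain p | i | u := x
  · refine ⟨C f (p.1 + 1), C_mem_H f _, ?_⟩
    rintro ⟨k, hk, h | h⟩
    · exact z_ne_yy p k h
    · have hpk : p = (k, f k) := z_inj.1 h
      have : p.1 = k := by rw [hpk]
      omega
  · refine ⟨C f (i + 1), C_mem_H f _, ?_⟩
    rintro ⟨k, hk, h | h⟩
    · have : i = k := yy_inj.1 h
      omega
    · exact z_ne_yy _ _ h.symm
  · refine ⟨C f 0, C_mem_H f _, ?_⟩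
    rintro ⟨k, hk, h | h⟩
    · exact yy_ne_cc k h.symm
    · exact z_ne_cc _ h.symm

lemma empty_of_mem_disjoint {G : Filter XX} [G.NeBot] {s t : Set XX}
    (hs : s ∈ G) (ht : t ∈ G) (h : s ∩ t = ∅) : False := by
  have := Filter.nonempty_of_mem (inter_mem hs ht)
  rw [h] at this
  exact Set.not_nonempty_empty this

/-- If a proper filter is finer than `pure x` then `x` belongs to all its members. -/
lemma mem_of_le_pure {G : Filter XX} [G.NeBot] {x : XX} (h : G ≤ pure x)
    {s : Set XX} (hs : s ∈ G) : x ∈ s := by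
  have hx : {x} ∈ G := h (by simp)
  have := Filter.nonempty_of_mem (inter_mem hs hx)
  obtain ⟨w, hw, hw'⟩ := this
  rwa [mem_singleton_iff.1 hw'] at hw

/-- Ground points only adhere to a set if they belong to it. -/
lemma ground_mem {A : Set XX} {p : ℕ × ℕ} (h : z p ∈ adhSet lm A) : z p ∈ A := by
  obtain ⟨G, hG, hle, hlim⟩ := h
  haveI := hG
  rcases hlim with hp | ⟨i, hi, _⟩ | ⟨hc, _⟩
  · exact mem_of_le_pure hp (le_principal_iff.1 hle)
  · exact absurd hi (z_ne_yy p i)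
  · exact absurd hc (z_ne_cc p)

/-- `V i ≤ F` for the test filter; more generally `sg g ∈ V i`. -/
def sg (g : ℕ → ℕ) : Set XX := {w | ∃ p : ℕ × ℕ, w = z p ∧ p.2 ≠ g p.1}

def FF : Filter XX := ⨅ g : ℕ → ℕ, 𝓟 (sg g)

lemma sg_mem_V (g : ℕ → ℕ) (i : ℕ) : sg g ∈ V i := by
  rw [mem_V]
  have hsub : {m | z (i, m) ∈ sg g}ᶜ ⊆ {g i} := by
    intro m hm
    simp only [mem_compl_iff, mem_setOf_eq, sg] at hm
    push_neg at hm
    have := hm (i, m) rfl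
    simpa using this
  exact Filter.mem_cofinite.2 ((Set.finite_singleton _).subset hsub)

lemma V_le_FF (i : ℕ) : V i ≤ FF := by
  refine le_iInf fun g => le_principal_iff.2 (sg_mem_V g i)

instance V_neBot (i : ℕ) : (V i).NeBot := Filter.map_neBot

lemma lm_yy_V (i : ℕ) : lm (yy i) (V i) := Or.inr (Or.inl ⟨i, rfl, le_refl _⟩)

lemma yy_mem_adh_FF (i : ℕ) : yy i ∈ adh lm FF :=
  ⟨V i, V_neBot i, V_le_FF i, lm_yy_V i⟩

lemma sg_mem_FF (g : ℕ → ℕ) : sg g ∈ FF :=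
  mem_iInf_of_mem g (mem_principal_self _)

theorem exists_hausdorff_subdiagonal_not_weakly_diagonal' :
      IsConvergence lm ∧
      (∀ F : Filter XX, F.NeBot → ∀ x y : XX, lm x F → lm y F → x = y) ∧
      (∀ A : Set XX, adhSet lm (adhSet lm A) = adhSet lm A) ∧
      ∃ F : Filter XX, adhSet lm (adh lm F) ≠ adh lm F := by
  refine ⟨⟨?_, ?_⟩, ?_, ?_, ?_⟩
  · -- refinement
    rintro x F G _ hle (h | ⟨i, hi, h⟩ | ⟨hc, f, h⟩)
    · exact Or.inl (hle.trans h)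
    · exact Or.inr (Or.inl ⟨i, hi, hle.trans h⟩)
    · exact Or.inr (Or.inr ⟨hc, f, hle.trans h⟩)
  · -- pure
    exact fun x => Or.inl le_rfl
  · -- Hausdorff
    rintro G hG x x' hx hx'
    haveI := hG
    rcases hx with h | ⟨i, hi, h⟩ | ⟨hc, f, h⟩ <;>
      rcases hx' with h' | ⟨i', hi', h'⟩ | ⟨hc', f', h'⟩
    · -- pure / pure
      by_contra hne
      have hx : {x} ∈ G := h (mem_pure.2 rfl)
      have hx' : ({x'} : Set XX) ∈ G := h' (mem_pure.2 rfl)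
      exact empty_of_mem_disjoint hx hx'
        (Set.singleton_inter_eq_empty.2 (by simpa using hne))
    · -- pure / V
      obtain ⟨s, hs, hxs⟩ := V_free i' x
      exact absurd (mem_of_le_pure h (h' hs)) hxs
    · -- pure / H
      obtain ⟨s, hs, hxs⟩ := H_free f' x
      exact absurd (mem_of_le_pure h (h' hs)) hxs
    · -- V / pure
      obtain ⟨s, hs, hxs⟩ := V_free i x'
      exact absurd (mem_of_le_pure h' (h hs)) hxs
    · -- V / V
      subst hi; subst hi'
      rcases eq_or_ne i i' with rfl | hne
      · rfl
      · exfalso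
        refine empty_of_mem_disjoint (h (col_mem_V i)) (h' (col_mem_V i')) ?_
        ext w
        simp only [mem_inter_iff, mem_empty_iff_false, iff_false, col, mem_setOf_eq]
        rintro ⟨⟨m, rfl⟩, ⟨m', hm'⟩⟩
        have : (i, m) = (i', m') := z_inj.1 hm'
        exact hne (by simpa using congrArg Prod.fst this)
    · -- V / H
      exfalso
      subst hi; subst hc'
      refine empty_of_mem_disjoint (h (col_mem_V i)) (h' (C_mem_H f' (i + 1))) ?_
      ext w
      simp only [mem_inter_iff, mem_empty_iff_false, iff_false, col, C, mem_setOf_eq]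
      rintro ⟨⟨m, rfl⟩, ⟨k, hk, hw | hw⟩⟩
      · exact z_ne_yy _ _ hw
      · have : (i, m) = (k, f' k) := z_inj.1 hw
        have : i = k := by simpa using congrArg Prod.fst this
        omega
    · -- H / pure
      obtain ⟨s, hs, hxs⟩ := H_free f x'
      exact absurd (mem_of_le_pure h' (h hs)) hxs
    · -- H / V
      exfalso
      subst hc; subst hi'
      refine empty_of_mem_disjoint (h' (col_mem_V i')) (h (C_mem_H f (i' + 1))) ?_
      ext w
      simp only [mem_inter_iff, mem_empty_iff_false, iff_false, col, C, mem_setOf_eq]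
      rintro ⟨⟨m, rfl⟩, ⟨k, hk, hw | hw⟩⟩
      · exact z_ne_yy _ _ hw
      · have : (i', m) = (k, f k) := z_inj.1 hw
        have : i' = k := by simpa using congrArg Prod.fst this
        omega
    · -- H / H
      rw [hc, hc']
  · -- subdiagonal
    intro A
    apply Subset.antisymm
    · rintro x ⟨G, hG, hle, hlim⟩
      haveI := hG
      have hS : adhSet lm A ∈ G := le_principal_iff.1 hle
      rcases hlim with h | ⟨i, hi, h⟩ | ⟨hc, f, h⟩
      · -- pure branch: x ∈ adhSet A directly
        exact mem_of_le_pure h hS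
      · -- y branch
        subst hi
        refine ⟨𝓟 A ⊓ V i, ?_, inf_le_left, Or.inr (Or.inl ⟨i, rfl, inf_le_right⟩)⟩
        rw [inf_comm, inf_principal_neBot_iff]
        intro B hB
        have hB' : B ∩ col i ∈ G := h (inter_mem hB (col_mem_V i))
        obtain ⟨w, hwS, hwB, hwcol⟩ := Filter.nonempty_of_mem (inter_mem hS hB')
        obtain ⟨m, rfl⟩ := hwcol
        exact ⟨z (i, m), hwB, ground_mem hwS⟩
      · -- c branch
        subst hc
        classical
        set f' : ℕ → ℕ := fun k => if hk : ∃ m, z (k, m) ∈ A then hk.choose else f k with hf'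
        have hchoice : ∀ k, (∃ m, z (k, m) ∈ A) → z (k, f' k) ∈ A := by
          intro k hk
          simp only [hf', dif_pos hk]
          exact hk.choose_spec
        refine ⟨𝓟 A ⊓ H f', ?_, inf_le_left, Or.inr (Or.inr ⟨rfl, f', inf_le_right⟩)⟩
        rw [inf_comm, inf_principal_neBot_iff]
        intro B hB
        obtain ⟨N, hN⟩ := mem_H.1 hB
        -- find a point of adhSet A in C f N
        obtain ⟨w, hwS, hwC⟩ := Filter.nonempty_of_mem (inter_mem hS (h (C_mem_H f N)))
        obtain ⟨k, hk, hw | hw⟩ := hwC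
        · -- w = yy k ∈ adhSet A
          subst hw
          obtain ⟨G₂, hG₂, hle₂, hlim₂⟩ := hwS
          haveI := hG₂
          have hA₂ : A ∈ G₂ := le_principal_iff.1 hle₂
          rcases hlim₂ with h₂ | ⟨j, hj, h₂⟩ | ⟨hc₂, _⟩
          · -- yy k ∈ A
            exact ⟨yy k, hN ⟨k, hk, Or.inl rfl⟩, mem_of_le_pure h₂ hA₂⟩
          · -- A meets column k
            have hjk : j = k := yy_inj.1 hj.symm
            subst hjk
            obtain ⟨w', hw'A, m, rfl⟩ :=
              Filter.nonempty_of_mem (inter_mem hA₂ (h₂ (col_mem_V j)))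
            have : z (j, f' j) ∈ A := hchoice j ⟨m, hw'A⟩
            exact ⟨z (j, f' j), hN ⟨j, hk, Or.inr rfl⟩, this⟩
          · exact absurd hc₂ (yy_ne_cc k)
        · -- w = z (k, f k) ∈ adhSet A, hence ∈ A
          subst hw
          have : z (k, f k) ∈ A := ground_mem hwS
          have : z (k, f' k) ∈ A := hchoice k ⟨f k, this⟩
          exact ⟨z (k, f' k), hN ⟨k, hk, Or.inr rfl⟩, this⟩
    · -- easy inclusion: S ⊆ adhSet S
      intro x hx
      exact ⟨pure x, pure_neBot, le_principal_iff.2 (by simpa using hx), Or.inl le_rfl⟩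
  · -- not weakly diagonal
    refine ⟨FF, ?_⟩
    intro heq
    -- cc ∈ adhSet (adh FF)
    have hcc : cc ∈ adhSet lm (adh lm FF) := by
      refine ⟨𝓟 (adh lm FF) ⊓ H (fun _ => 0), ?_, inf_le_left,
        Or.inr (Or.inr ⟨rfl, fun _ => 0, inf_le_right⟩)⟩
      rw [inf_comm, inf_principal_neBot_iff]
      intro B hB
      obtain ⟨N, hN⟩ := mem_H.1 hB
      exact ⟨yy N, hN ⟨N, le_refl N, Or.inl rfl⟩, yy_mem_adh_FF N⟩
    -- cc ∉ adh FF
    have hcc' : cc ∉ adh lm FF := by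
      rintro ⟨G, hG, hle, hlim⟩
      haveI := hG
      rcases hlim with h | ⟨i, hi, h⟩ | ⟨_, f, h⟩
      · -- G ≤ pure cc, but sg 0 ∈ FF misses cc
        have h1 : sg (fun _ => 0) ∈ G := hle (sg_mem_FF _)
        have := mem_of_le_pure h h1
        obtain ⟨p, hp, _⟩ := this
        exact z_ne_cc p hp.symm
      · exact yy_ne_cc i hi.symm
      · -- G ≤ H f and G ≤ FF: C f 0 and sg f are disjoint
        refine empty_of_mem_disjoint (hle (sg_mem_FF f)) (h (C_mem_H f 0)) ?_
        ext w
        simp only [mem_inter_iff, mem_empty_iff_false, iff_false, sg, C, mem_setOf_eq]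
        rintro ⟨⟨p, rfl, hp⟩, ⟨k, _, hw | hw⟩⟩
        · exact z_ne_yy _ _ hw
        · have : p = (k, f k) := z_inj.1 hw
          subst this
          exact hp rfl
    rw [heq] at hcc
    exact hcc' hcc

end HSNWD

/-- There exists a Hausdorff subdiagonal convergence that is not weakly diagonal. -/
theorem exists_hausdorff_subdiagonal_not_weakly_diagonal :
    ∃ (X : Type) (lim : X → Filter X → Prop),
      IsConvergence lim ∧
      (∀ F : Filter X, F.NeBot → ∀ x y : X, lim x F → lim y F → x = y) ∧
      (∀ A : Set X, adhSet lim (adhSet lim A) = adhSet lim A) ∧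
      ∃ F : Filter X, adhSet lim (adh lim F) ≠ adh lim F :=
  ⟨HSNWD.XX, HSNWD.lm, HSNWD.exists_hausdorff_subdiagonal_not_weakly_diagonal'⟩
end
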